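/- arXiv:2505.03966 — 2 statements merged into one kernel-verified Lean document; each statement's English description precedes it below -/
import Mathlib

section
/- Let G : ℝⁿ → ℝ be σ-strongly convex with directional derivatives, let xᵏ ∈ ℝⁿ, and let Δxᵏ with ‖Δxᵏ‖ = 1 satisfy G'(xᵏ; (z - xᵏ)/‖z - xᵏ‖) ≥ G'(xᵏ; Δxᵏ) for all z ≠ xᵏ. Then inf_z G(z) ≥ G(xᵏ) - (1/(2σ))·[G'(xᵏ; Δxᵏ)]². -/
/-!
Writing `t = ‖z - xᵏ‖`, strong convexity, positive homogeneity of `G'(xᵏ; ·)` and the minimality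
of `Δxᵏ` give `G z ≥ G xᵏ + t d + (σ/2) t²` with `d = G'(xᵏ; Δxᵏ)`; the quadratic in `t` on the right
is minimised at `t = -d/σ`, where it equals `G xᵏ - d²/(2σ)`.
-/

theorem neg_sq_div_le_mul_add_sq {σ : ℝ} (hσ : 0 < σ) (d t : ℝ) :
    -(1 / (2 * σ) * d ^ 2) ≤ t * d + σ / 2 * t ^ 2 := by
  have hsq : 0 ≤ (σ * t + d) ^ 2 / (2 * σ) := by positivity
  have hexpand : (σ * t + d) ^ 2 / (2 * σ) = t * d + σ / 2 * t ^ 2 + 1 / (2 * σ) * d ^ 2 := by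
    field_simp
    ring
  linarith

theorem map_eq_norm_mul_map_normalize {E : Type*} [NormedAddCommGroup E] [NormedSpace ℝ E]
    {φ : E → ℝ} (hφ : ∀ c : ℝ, 0 < c → ∀ v, φ (c • v) = c * φ v) {v : E} (hv : v ≠ 0) :
    φ v = ‖v‖ * φ (‖v‖⁻¹ • v) := by
  have hnorm : 0 < ‖v‖ := norm_pos_iff.mpr hv
  rw [← hφ _ hnorm, smul_inv_smul₀ hnorm.ne']

theorem stmt_4_general {n : ℕ} (G : EuclideanSpace ℝ (Fin n) → ℝ) (σ : ℝ) (hσ : 0 < σ)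
    (G' : EuclideanSpace ℝ (Fin n) → EuclideanSpace ℝ (Fin n) → ℝ)
    (hsc : ∀ x y, G y ≥ G x + G' x (y - x) + σ / 2 * ‖y - x‖ ^ 2)
    (hhom : ∀ x (c : ℝ), 0 < c → ∀ v, G' x (c • v) = c * G' x v)
    (xk Δxk : EuclideanSpace ℝ (Fin n))
    (hmin : ∀ z, z ≠ xk → G' xk Δxk ≤ G' xk (‖z - xk‖⁻¹ • (z - xk))) :
    ∀ z, G z ≥ G xk - 1 / (2 * σ) * (G' xk Δxk) ^ 2 := by
  intro z
  obtain rfl | hz := eq_or_ne z xk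
  · have : 0 ≤ 1 / (2 * σ) * (G' z Δxk) ^ 2 := by positivity
    linarith
  have hdir : ‖z - xk‖ * G' xk Δxk ≤ G' xk (z - xk) := by
    rw [map_eq_norm_mul_map_normalize (hhom xk) (sub_ne_zero.mpr hz)]
    exact mul_le_mul_of_nonneg_left (hmin z hz) (norm_nonneg _)
  calc G xk - 1 / (2 * σ) * (G' xk Δxk) ^ 2
      ≤ G xk + ‖z - xk‖ * G' xk Δxk + σ / 2 * ‖z - xk‖ ^ 2 := by
        linarith [neg_sq_div_le_mul_add_sq hσ (G' xk Δxk) ‖z - xk‖]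
    _ ≤ G xk + G' xk (z - xk) + σ / 2 * ‖z - xk‖ ^ 2 := by gcongr
    _ ≤ G z := hsc xk z

/-- Strong-convexity gap bound: if `G` is `σ`-strongly convex (inequality form) with
positively homogeneous directional derivative `G'`, and `Δxᵏ` is a unit direction whose
directional derivative is smallest among unit directions, then
`inf_z G(z) ≥ G(xᵏ) - (1/(2σ)) (G'(xᵏ; Δxᵏ))²`. -/
theorem stmt_4 {n : ℕ} (G : EuclideanSpace ℝ (Fin n) → ℝ) (σ : ℝ) (hσ : 0 < σ)
    (G' : EuclideanSpace ℝ (Fin n) → EuclideanSpace ℝ (Fin n) → ℝ)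
    (hsc : ∀ x y, G y ≥ G x + G' x (y - x) + σ / 2 * ‖y - x‖ ^ 2)
    (hhom : ∀ x (c : ℝ), 0 < c → ∀ v, G' x (c • v) = c * G' x v)
    (xk Δxk : EuclideanSpace ℝ (Fin n)) (hΔ : ‖Δxk‖ = 1)
    (hmin : ∀ z, z ≠ xk → G' xk Δxk ≤ G' xk (‖z - xk‖⁻¹ • (z - xk))) :
    ∀ z, G z ≥ G xk - 1 / (2 * σ) * (G' xk Δxk) ^ 2 :=
  stmt_4_general G σ hσ G' hsc hhom xk Δxk hmin
end

section
/- Let G : ℝⁿ → ℝ be σ-strongly convex, twice directionally differentiable with second-order directional derivatives bounded in absolute value by L > σ, and let x* be a minimizer of G. Define the sequence x^{k+1} = xᵏ + ηᵏ·Δxᵏ where Δxᵏ is a unit direction minimizing the directional derivative G'(xᵏ; ·) over unit directions, and ηᵏ = -G'(xᵏ; Δxᵏ)/L. Then G(xᵏ) - G(x*) ≤ (1 - σ/L)ᵏ·(G(x⁰) - G(x*)) for all k. -/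
/-!
A step of length `t` along a unit direction `d` changes `G` by `t G'(x; d)` up to `L t² / 2`,
so the step `η = -G'(x; d) / L` decreases `G` by at least `G'(x; d)² / (2L)`. For the steepest
unit direction, strong convexity tested on the direction towards `y` gives the
Polyak–Łojasiewicz inequality `G'(x; d)² ≥ 2σ (G x - G y)`; hence every step contracts the
optimality gap by the factor `1 - σ / L`. That the step is forward (`G'(x; d) ≤ 0`, so `η ≥ 0`)
comes from the bounded Taylor expansion, which forces `G'(x; v) + G'(x; -v) ≤ 0`.
-/

section SteepestDescent

variable {E : Type*} [NormedAddCommGroup E] [NormedSpace ℝ E]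
  (G : E → ℝ) (G' G'' : E → E → ℝ) (L : ℝ)

lemma abs_taylor_remainder_le
    (htaylor : ∀ x φ (t : ℝ), 0 ≤ t → ∃ t₀ ∈ Set.Icc (0 : ℝ) t,
      G (x + t • φ) = G x + t * G' x φ + t ^ 2 / 2 * G'' (x + t₀ • φ) φ)
    (hG'' : ∀ x φ, ‖φ‖ = 1 → |G'' x φ| ≤ L)
    (x : E) {φ : E} (hφ : ‖φ‖ = 1) {t : ℝ} (ht : 0 ≤ t) :
    |G (x + t • φ) - G x - t * G' x φ| ≤ t ^ 2 / 2 * L := by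
  obtain ⟨t₀, -, hG⟩ := htaylor x φ t ht
  rw [hG, show G x + t * G' x φ + t ^ 2 / 2 * G'' (x + t₀ • φ) φ - G x - t * G' x φ
      = t ^ 2 / 2 * G'' (x + t₀ • φ) φ by ring, abs_mul, abs_of_nonneg (by positivity)]
  exact mul_le_mul_of_nonneg_left (hG'' _ φ hφ) (by positivity)

lemma dirDeriv_add_dirDeriv_neg_nonpos (hL : 0 < L)
    (htaylor : ∀ x φ (t : ℝ), 0 ≤ t → ∃ t₀ ∈ Set.Icc (0 : ℝ) t,
      G (x + t • φ) = G x + t * G' x φ + t ^ 2 / 2 * G'' (x + t₀ • φ) φ)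
    (hG'' : ∀ x φ, ‖φ‖ = 1 → |G'' x φ| ≤ L)
    (x : E) {v : E} (hv : ‖v‖ = 1) :
    G' x v + G' x (-v) ≤ 0 := by
  have hR := abs_taylor_remainder_le G G' G'' L htaylor hG''
  -- Both one-sided expansions at `x`, and the two expansions from `x - t v` (whose first-order
  -- terms cancel), bound the second difference `G (x + t v) - 2 G x + G (x - t v)`.
  have bound : ∀ t > 0, G' x v + G' x (-v) ≤ 4 * L * t := by
    intro t ht
    have hplus := abs_le.mp (hR x hv ht.le)
    have hminus := abs_le.mp (hR x (φ := -v) (by rwa [norm_neg]) ht.le)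
    have hfar := abs_le.mp (hR (x - t • v) hv (t := 2 * t) (by positivity))
    have hnear := abs_le.mp (hR (x - t • v) hv ht.le)
    rw [show x + t • -v = x - t • v by module] at hminus
    rw [show x - t • v + (2 * t) • v = x + t • v by module] at hfar
    rw [show x - t • v + t • v = x by module] at hnear
    have : t * (G' x v + G' x (-v)) ≤ t * (4 * L * t) := by linarith
    exact le_of_mul_le_mul_left this ht
  refine le_of_forall_pos_le_add fun ε hε => ?_
  simpa [mul_div_cancel₀ ε (by positivity : 4 * L ≠ 0)] using bound (ε / (4 * L)) (by positivity)

lemma dirDeriv_nonpos_of_isMinOn_sphere (hL : 0 < L)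
    (htaylor : ∀ x φ (t : ℝ), 0 ≤ t → ∃ t₀ ∈ Set.Icc (0 : ℝ) t,
      G (x + t • φ) = G x + t * G' x φ + t ^ 2 / 2 * G'' (x + t₀ • φ) φ)
    (hG'' : ∀ x φ, ‖φ‖ = 1 → |G'' x φ| ≤ L)
    {x d : E} (hd : ‖d‖ = 1) (hdmin : ∀ v, ‖v‖ = 1 → G' x d ≤ G' x v) :
    G' x d ≤ 0 := by
  have := hdmin (-d) (by rwa [norm_neg])
  have := dirDeriv_add_dirDeriv_neg_nonpos G G' G'' L hL htaylor hG'' x hd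
  linarith

lemma descent_step_le (hL : 0 < L)
    (htaylor : ∀ x φ (t : ℝ), 0 ≤ t → ∃ t₀ ∈ Set.Icc (0 : ℝ) t,
      G (x + t • φ) = G x + t * G' x φ + t ^ 2 / 2 * G'' (x + t₀ • φ) φ)
    (hG'' : ∀ x φ, ‖φ‖ = 1 → |G'' x φ| ≤ L)
    (x : E) {d : E} (hd : ‖d‖ = 1) (hneg : G' x d ≤ 0) :
    G (x + (-G' x d / L) • d) ≤ G x - G' x d ^ 2 / (2 * L) := by
  have hη : 0 ≤ -G' x d / L := div_nonneg (neg_nonneg.mpr hneg) hL.le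
  have hR := (abs_le.mp (abs_taylor_remainder_le G G' G'' L htaylor hG'' x hd hη)).2
  have : -G' x d / L * G' x d + (-G' x d / L) ^ 2 / 2 * L = -(G' x d ^ 2 / (2 * L)) := by
    field_simp
    ring
  linarith

lemma two_mul_mul_sub_le_sq_of_strongConvex {σ : ℝ} (hσ : 0 ≤ σ)
    (hsc : ∀ x y, G y ≥ G x + G' x (y - x) + σ / 2 * ‖y - x‖ ^ 2)
    (hhom : ∀ x (c : ℝ), 0 < c → ∀ v, G' x (c • v) = c * G' x v)
    {x d : E} (hdmin : ∀ v, ‖v‖ = 1 → G' x d ≤ G' x v) (y : E) :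
    2 * σ * (G x - G y) ≤ G' x d ^ 2 := by
  rcases eq_or_ne y x with rfl | hyx
  · simpa using sq_nonneg _
  set r := ‖y - x‖
  have hr : 0 < r := norm_pos_iff.mpr (sub_ne_zero.mpr hyx)
  have hunit : ‖r⁻¹ • (y - x)‖ = 1 := by
    rw [norm_smul, norm_inv, norm_norm, inv_mul_cancel₀ hr.ne']
  have hdir : r * G' x d ≤ G' x (y - x) := by
    calc r * G' x d ≤ r * G' x (r⁻¹ • (y - x)) :=
          mul_le_mul_of_nonneg_left (hdmin _ hunit) hr.le
      _ = G' x (y - x) := by rw [← hhom x r hr, smul_inv_smul₀ hr.ne']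
  have hgap : r * G' x d ≤ -(G x - G y + σ / 2 * r ^ 2) := by linarith [hsc x y]
  rcases le_or_gt (G x - G y) 0 with hle | hpos
  · nlinarith [sq_nonneg (G' x d)]
  have hM : 0 ≤ G x - G y + σ / 2 * r ^ 2 := by positivity
  have hsq : (G x - G y + σ / 2 * r ^ 2) ^ 2 ≤ (r * G' x d) ^ 2 := by
    rw [← neg_sq (r * G' x d)]
    exact pow_le_pow_left₀ hM (le_neg_of_le_neg hgap) 2
  -- `(a + b)² ≥ 4ab` with `a = G x - G y` and `b = σ r² / 2`
  have hamgm : 2 * σ * (G x - G y) * r ^ 2 ≤ (G x - G y + σ / 2 * r ^ 2) ^ 2 := by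
    nlinarith [sq_nonneg (G x - G y - σ / 2 * r ^ 2)]
  refine le_of_mul_le_mul_right ?_ (pow_pos hr 2)
  linarith [mul_pow r (G' x d) 2]

end SteepestDescent

theorem stmt_7_general {n : ℕ} (G : EuclideanSpace ℝ (Fin n) → ℝ) (σ L : ℝ)
    (hσ : 0 < σ) (hσL : σ < L)
    (G' : EuclideanSpace ℝ (Fin n) → EuclideanSpace ℝ (Fin n) → ℝ)
    (G'' : EuclideanSpace ℝ (Fin n) → EuclideanSpace ℝ (Fin n) → ℝ)
    (hsc : ∀ x y, G y ≥ G x + G' x (y - x) + σ / 2 * ‖y - x‖ ^ 2)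
    (hhom : ∀ x (c : ℝ), 0 < c → ∀ v, G' x (c • v) = c * G' x v)
    (htaylor : ∀ x φ (t : ℝ), 0 ≤ t → ∃ t₀ ∈ Set.Icc (0 : ℝ) t,
      G (x + t • φ) = G x + t * G' x φ + t ^ 2 / 2 * G'' (x + t₀ • φ) φ)
    (hG'' : ∀ x φ, ‖φ‖ = 1 → |G'' x φ| ≤ L)
    (xstar : EuclideanSpace ℝ (Fin n))
    (x : ℕ → EuclideanSpace ℝ (Fin n)) (Δx : ℕ → EuclideanSpace ℝ (Fin n))
    (η : ℕ → ℝ)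
    (hΔunit : ∀ k, ‖Δx k‖ = 1)
    (hΔmin : ∀ k v, ‖v‖ = 1 → G' (x k) (Δx k) ≤ G' (x k) v)
    (hη : ∀ k, η k = -(G' (x k) (Δx k)) / L)
    (hstep : ∀ k, x (k + 1) = x k + η k • Δx k) :
    ∀ k, G (x k) - G xstar ≤ (1 - σ / L) ^ k * (G (x 0) - G xstar) := by
  have hL : 0 < L := hσ.trans hσL
  have hrate : 0 ≤ 1 - σ / L := sub_nonneg.mpr ((div_le_one hL).mpr hσL.le)
  have contract : ∀ k, G (x (k + 1)) - G xstar ≤ (1 - σ / L) * (G (x k) - G xstar) := by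
    intro k
    have hdesc := descent_step_le G G' G'' L hL htaylor hG'' (x k) (hΔunit k)
      (dirDeriv_nonpos_of_isMinOn_sphere G G' G'' L hL htaylor hG'' (hΔunit k) (hΔmin k))
    have hPL := two_mul_mul_sub_le_sq_of_strongConvex G G' hσ.le hsc hhom (hΔmin k) xstar
    rw [← hη, ← hstep] at hdesc
    have : σ / L * (G (x k) - G xstar) ≤ G' (x k) (Δx k) ^ 2 / (2 * L) := by
      rw [div_mul_eq_mul_div, div_le_div_iff₀ hL (by positivity)]
      nlinarith
    linarith
  intro k
  induction k with
  | zero => simp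
  | succ k ih =>
    calc G (x (k + 1)) - G xstar ≤ (1 - σ / L) * (G (x k) - G xstar) := contract k
      _ ≤ (1 - σ / L) * ((1 - σ / L) ^ k * (G (x 0) - G xstar)) :=
          mul_le_mul_of_nonneg_left ih hrate
      _ = (1 - σ / L) ^ (k + 1) * (G (x 0) - G xstar) := by ring

/-- Convergence of semi-derivative descent: for `σ`-strongly convex `G` with positively
homogeneous directional derivative `G'`, second-order directional Taylor expansion with
second-order derivative `G''` bounded by `L > σ` on unit directions, global minimizer `x*`,
and iterates `x^{k+1} = xᵏ + ηᵏ • Δxᵏ` with `Δxᵏ` the steepest unit direction and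
`ηᵏ = -G'(xᵏ; Δxᵏ)/L`, one has
`G(xᵏ) - G(x*) ≤ (1 - σ/L)ᵏ (G(x⁰) - G(x*))`. -/
theorem stmt_7 {n : ℕ} (G : EuclideanSpace ℝ (Fin n) → ℝ) (σ L : ℝ)
    (hσ : 0 < σ) (hσL : σ < L)
    (G' : EuclideanSpace ℝ (Fin n) → EuclideanSpace ℝ (Fin n) → ℝ)
    (G'' : EuclideanSpace ℝ (Fin n) → EuclideanSpace ℝ (Fin n) → ℝ)
    (hsc : ∀ x y, G y ≥ G x + G' x (y - x) + σ / 2 * ‖y - x‖ ^ 2)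
    (hhom : ∀ x (c : ℝ), 0 < c → ∀ v, G' x (c • v) = c * G' x v)
    (htaylor : ∀ x φ (t : ℝ), 0 ≤ t → ∃ t₀ ∈ Set.Icc (0 : ℝ) t,
      G (x + t • φ) = G x + t * G' x φ + t ^ 2 / 2 * G'' (x + t₀ • φ) φ)
    (hG'' : ∀ x φ, ‖φ‖ = 1 → |G'' x φ| ≤ L)
    (xstar : EuclideanSpace ℝ (Fin n)) (hmin : ∀ z, G xstar ≤ G z)
    (x : ℕ → EuclideanSpace ℝ (Fin n)) (Δx : ℕ → EuclideanSpace ℝ (Fin n))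
    (η : ℕ → ℝ)
    (hΔunit : ∀ k, ‖Δx k‖ = 1)
    (hΔmin : ∀ k v, ‖v‖ = 1 → G' (x k) (Δx k) ≤ G' (x k) v)
    (hη : ∀ k, η k = -(G' (x k) (Δx k)) / L)
    (hstep : ∀ k, x (k + 1) = x k + η k • Δx k) :
    ∀ k, G (x k) - G xstar ≤ (1 - σ / L) ^ k * (G (x 0) - G xstar) :=
  stmt_7_general G σ L hσ hσL G' G'' hsc hhom htaylor hG'' xstar x Δx η hΔunit hΔmin hη hstep
end
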